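/- arXiv:quant-ph/0510230 — 2 statements merged into one kernel-verified Lean document; each statement's English description precedes it below -/
import Mathlib

section
/- Almost As Good As New Lemma (gentle measurement): Let ρ be a density matrix on ℂ^d and let Λ be a POVM element on ℂ^d such that the measurement outcome 1 occurs with probability tr(Λρ) = ε, where ε < 1. Let ρ₀ := √(1−Λ) ρ √(1−Λ) / tr((1−Λ)ρ) be the normalized post-measurement state conditioned on outcome 0 (note tr((1−Λ)ρ) = 1 − ε > 0, so ρ₀ is a density matrix). Then the trace distance satisfies ‖ρ − ρ₀‖_tr ≤ √ε. -/
open Matrix BigOperators ComplexOrder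

noncomputable def Matrix.PosSemidef.sqrt {n 𝕜 : Type*} [Fintype n] [RCLike 𝕜] [DecidableEq n]
    {A : Matrix n n 𝕜} (hA : A.PosSemidef) : Matrix n n 𝕜 :=
  hA.1.eigenvectorUnitary.1 * diagonal ((↑) ∘ (√·) ∘ hA.1.eigenvalues) *
    (star hA.1.eigenvectorUnitary : Matrix n n 𝕜)

/-!
Write `N = √(1 - Λ)`, so that `ρ₀ = N ρ N / (1 - ε)`, and let `P` be the spectral projection of
`ρ - ρ₀` onto its nonnegative eigenvalues. Both states have trace one, so the trace distance is
`p - r` with `p = tr (P ρ)` and `r = tr (P ρ₀)`. Since `0 ≤ 1 - Λ ≤ 1` we have `1 - Λ ≤ N`, hence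
`1 - ε ≤ tr (N ρ) = tr (P N ρ) + tr ((1 - P) N ρ)`, and Cauchy–Schwarz for the semi-inner product
`⟪X, Y⟫ = tr (Y ρ Xᴴ)` bounds the right-hand side by `√(1 - ε) (√(p r) + √((1 - p) (1 - r)))`.
Finally `(p - r)² + (√(p r) + √((1 - p) (1 - r)))² ≤ 1` for `p, r ∈ [0, 1]`, so `(p - r)² ≤ ε`.
-/

open scoped MatrixOrder

namespace CFC

variable {A : Type*} [PartialOrder A] [Ring A] [StarRing A] [TopologicalSpace A]
  [StarOrderedRing A] [Algebra ℝ A] [ContinuousFunctionalCalculus ℝ A IsSelfAdjoint]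
  [NonnegSpectrumClass ℝ A] [IsSemitopologicalRing A] [T2Space A]

lemma le_sqrt_of_le_one {a : A} (h0 : 0 ≤ a) (h1 : a ≤ 1) : a ≤ sqrt a := by
  rw [sqrt_eq_real_sqrt a, cfcₙ_eq_cfc]
  conv_lhs => rw [← cfc_id' ℝ a]
  exact cfc_mono fun x hx => Real.le_sqrt_self_iff.mpr ((CFC.le_one_iff a).mp h1 x hx)

end CFC

lemma sq_sub_add_sq_sqrt_mul_add_sqrt_mul_le_one {p r : ℝ} (hp : p ∈ Set.Icc 0 1)
    (hr : r ∈ Set.Icc 0 1) :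
    (p - r) ^ 2 + (√p * √r + √(1 - p) * √(1 - r)) ^ 2 ≤ 1 := by
  set a := √p
  set b := √r
  set c := √(1 - p)
  set e := √(1 - r)
  have ha : a ^ 2 = p := Real.sq_sqrt hp.1
  have hb : b ^ 2 = r := Real.sq_sqrt hr.1
  have hc : c ^ 2 = 1 - p := Real.sq_sqrt (sub_nonneg.mpr hp.2)
  have he : e ^ 2 = 1 - r := Real.sq_sqrt (sub_nonneg.mpr hr.2)
  have hpr : p - r = (a * e - b * c) * (a * e + b * c) := by
    linear_combination (-e ^ 2) * ha + c ^ 2 * hb + r * hc - p * he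
  -- Lagrange's identity for `(a, c)` and `(b, e)`, two unit vectors
  have hone : (a * e - b * c) ^ 2 + (a * b + c * e) ^ 2 = 1 := by
    linear_combination (b ^ 2 + e ^ 2) * ha + hb + (b ^ 2 + e ^ 2) * hc + he
  have hle : (a * e + b * c) ^ 2 ≤ 1 := by
    nlinarith [sq_nonneg (a * b - c * e)]
  rw [hpr, mul_pow]
  nlinarith [mul_le_mul_of_nonneg_left hle (sq_nonneg (a * e - b * c))]

namespace Matrix

variable {n 𝕜 : Type*} [Fintype n] [RCLike 𝕜]

lemma PosSemidef.sqrt_eq_cfcSqrt [DecidableEq n] {A : Matrix n n 𝕜} (hA : A.PosSemidef) :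
    hA.sqrt = CFC.sqrt A := by
  rw [CFC.sqrt_eq_real_sqrt A hA.nonneg, cfcₙ_eq_cfc, hA.1.cfc_eq]
  rfl

lemma PosSemidef.trace_mul_nonneg {A B : Matrix n n 𝕜} (hA : A.PosSemidef) (hB : B.PosSemidef) :
    0 ≤ (A * B).trace := by
  classical
  obtain ⟨X, rfl⟩ := CStarAlgebra.nonneg_iff_eq_star_mul_self.mp hA.nonneg
  rw [mul_assoc, trace_mul_comm, star_eq_conjTranspose]
  exact (hB.mul_mul_conjTranspose_same X).trace_nonneg

lemma PosSemidef.norm_trace_mul_mul_conjTranspose_le {M : Matrix n n 𝕜} (hM : M.PosSemidef)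
    (x y : Matrix n n 𝕜) :
    ‖(y * M * xᴴ).trace‖ ≤
      √(RCLike.re (x * M * xᴴ).trace) * √(RCLike.re (y * M * yᴴ).trace) := by
  let := M.toMatrixSeminormedAddCommGroup hM
  let := M.toMatrixInnerProductSpace hM
  exact norm_inner_le_norm (𝕜 := 𝕜) x y

lemma _root_.IsStarProjection.trace_mul_mul_self {Q : Matrix n n 𝕜} (hQ : IsStarProjection Q)
    (X : Matrix n n 𝕜) : (Q * X * Q).trace = (Q * X).trace := by
  rw [trace_mul_comm, ← mul_assoc, hQ.isIdempotentElem.eq]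

lemma _root_.IsStarProjection.re_trace_mul_mul_le {Q N ρ : Matrix n n 𝕜}
    (hQ : IsStarProjection Q) (hN : N.IsHermitian) (hρ : ρ.PosSemidef) :
    RCLike.re (Q * N * ρ).trace ≤
      √(RCLike.re (Q * ρ).trace) * √(RCLike.re (Q * (N * ρ * N)).trace) := by
  have hcs := hρ.norm_trace_mul_mul_conjTranspose_le Q (Q * N)
  have hQH : Qᴴ = Q := hQ.isSelfAdjoint.star_eq
  rw [conjTranspose_mul, hQH, hN.eq,
    show Q * N * ρ * Q = Q * (N * ρ) * Q by simp only [mul_assoc],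
    show Q * N * ρ * (N * Q) = Q * (N * ρ * N) * Q by simp only [mul_assoc],
    hQ.trace_mul_mul_self, hQ.trace_mul_mul_self, hQ.trace_mul_mul_self, ← mul_assoc] at hcs
  exact (RCLike.re_le_norm _).trans hcs

lemma trace_conjStarAlgAut [DecidableEq n] (U : unitary (Matrix n n 𝕜)) (X : Matrix n n 𝕜) :
    (Unitary.conjStarAlgAut 𝕜 _ U X).trace = X.trace := by
  rw [Unitary.conjStarAlgAut_apply, trace_mul_cycle, Unitary.coe_star_mul_self, one_mul]

lemma IsHermitian.exists_isStarProjection_half_sum_abs_eigenvalues_eq [DecidableEq n]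
    {A : Matrix n n 𝕜} (hA : A.IsHermitian) (h0 : A.trace = 0) :
    ∃ P : Matrix n n 𝕜, IsStarProjection P ∧
      1 / 2 * ∑ i, |hA.eigenvalues i| = RCLike.re (P * A).trace := by
  set f : ℝ → ℝ := fun x => if 0 ≤ x then 1 else 0
  have hdiag :
      IsStarProjection (diagonal (RCLike.ofReal ∘ f ∘ hA.eigenvalues) : Matrix n n 𝕜) := by
    refine ⟨?_, ?_⟩
    · rw [IsIdempotentElem, diagonal_mul_diagonal]
      congr 1; funext i; simp only [Function.comp_apply, f]; split_ifs <;> simp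
    · rw [IsSelfAdjoint, star_eq_conjTranspose, diagonal_conjTranspose]
      congr 1; funext i; simp
  refine ⟨hA.cfc f, hdiag.map _, ?_⟩
  have hsum : ∑ i, hA.eigenvalues i = 0 := by
    have := hA.trace_eq_sum_eigenvalues
    rw [h0] at this
    exact_mod_cast this.symm
  have habs : ∀ x : ℝ, |x| = 2 * (f x * x) - x := by
    intro x
    simp only [f]
    split_ifs with hx
    · rw [abs_of_nonneg hx]; ring
    · rw [abs_of_neg (not_le.mp hx)]; ring
  have hPA : hA.cfc f * A =
      Unitary.conjStarAlgAut 𝕜 _ hA.eigenvectorUnitary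
        (diagonal (RCLike.ofReal ∘ (fun x => f x * x) ∘ hA.eigenvalues)) := by
    conv_lhs => rw [IsHermitian.cfc]; arg 2; rw [hA.spectral_theorem]
    rw [← map_mul, diagonal_mul_diagonal]
    congr 2; funext i; simp
  rw [hPA, trace_conjStarAlgAut, trace_diagonal, map_sum]
  simp only [Function.comp_apply, RCLike.ofReal_re]
  rw [Finset.sum_congr rfl fun i _ => habs _, Finset.sum_sub_distrib, hsum, ← Finset.mul_sum]
  ring

lemma trace_cfcSqrt_mul_mul_cfcSqrt [DecidableEq n] {A : Matrix n n 𝕜} (hA : 0 ≤ A)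
    (ρ : Matrix n n 𝕜) : (CFC.sqrt A * ρ * CFC.sqrt A).trace = (A * ρ).trace := by
  rw [trace_mul_comm, ← mul_assoc, CFC.sqrt_mul_sqrt_self A]

lemma re_trace_one_sub_mul [DecidableEq n] (P : Matrix n n 𝕜) {X : Matrix n n 𝕜}
    (hX : X.trace = 1) :
    RCLike.re ((1 - P) * X).trace = 1 - RCLike.re (P * X).trace := by
  rw [sub_mul, one_mul, trace_sub, hX, map_sub, RCLike.one_re]

lemma _root_.IsStarProjection.re_trace_mul_mem_Icc [DecidableEq n] {P X : Matrix n n 𝕜}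
    (hP : IsStarProjection P) (hX : X.PosSemidef) (htr : X.trace = 1) :
    RCLike.re (P * X).trace ∈ Set.Icc 0 1 := by
  have h0 := RCLike.nonneg_iff.mp (hP.nonneg.posSemidef.trace_mul_nonneg hX)
  have h1 := RCLike.nonneg_iff.mp (hP.one_sub_nonneg.posSemidef.trace_mul_nonneg hX)
  rw [re_trace_one_sub_mul P htr] at h1
  exact ⟨h0.1, sub_nonneg.mp h1.1⟩

section GentleMeasurement

variable [DecidableEq n] {ρ Λ ρ₀ : Matrix n n 𝕜} {ε : ℝ}

lemma trace_postMeasurement_eq_one (hρtr : ρ.trace = 1) (hΛ1 : Λ ≤ 1)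
    (hε : (Λ * ρ).trace = ε) (hεlt : ε < 1)
    (hρ₀ : ρ₀ = ((1 - ε : ℝ) : 𝕜)⁻¹ • (CFC.sqrt (1 - Λ) * ρ * CFC.sqrt (1 - Λ))) :
    ρ₀.trace = 1 := by
  have h1ε : (1 - ε : 𝕜) ≠ 0 := by exact_mod_cast (sub_pos.mpr hεlt).ne'
  rw [hρ₀, trace_smul, trace_cfcSqrt_mul_mul_cfcSqrt (sub_nonneg.mpr hΛ1), sub_mul, one_mul,
    trace_sub, hρtr, hε, smul_eq_mul, RCLike.ofReal_sub, RCLike.ofReal_one, inv_mul_cancel₀ h1ε]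

lemma posSemidef_postMeasurement (hρ : ρ.PosSemidef) (hεlt : ε < 1)
    (hρ₀ : ρ₀ = ((1 - ε : ℝ) : 𝕜)⁻¹ • (CFC.sqrt (1 - Λ) * ρ * CFC.sqrt (1 - Λ))) :
    ρ₀.PosSemidef := by
  rw [hρ₀]
  refine PosSemidef.smul ?_ ?_
  · exact ((CFC.sqrt_nonneg _).isSelfAdjoint.conjugate_nonneg hρ.nonneg).posSemidef
  · exact inv_nonneg.mpr (RCLike.ofReal_nonneg.mpr (sub_pos.mpr hεlt).le)

lemma sqrt_one_sub_le_sqrt_mul_sqrt_add (hρ : ρ.PosSemidef) (hρtr : ρ.trace = 1) (hΛ : 0 ≤ Λ)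
    (hΛ1 : Λ ≤ 1) (hε : (Λ * ρ).trace = ε) (hεlt : ε < 1)
    (hρ₀ : ρ₀ = ((1 - ε : ℝ) : 𝕜)⁻¹ • (CFC.sqrt (1 - Λ) * ρ * CFC.sqrt (1 - Λ)))
    {P : Matrix n n 𝕜} (hP : IsStarProjection P) :
    √(1 - ε) ≤ √(RCLike.re (P * ρ).trace) * √(RCLike.re (P * ρ₀).trace) +
      √(1 - RCLike.re (P * ρ).trace) * √(1 - RCLike.re (P * ρ₀).trace) := by
  set N := CFC.sqrt (1 - Λ)
  have h1ε : 0 < 1 - ε := sub_pos.mpr hεlt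
  have hNH : N.IsHermitian := (CFC.sqrt_nonneg _).posSemidef.isHermitian
  have hNρN : N * ρ * N = ((1 - ε : ℝ) : 𝕜) • ρ₀ := by
    rw [hρ₀, smul_inv_smul₀ (by exact_mod_cast h1ε.ne')]
  have hσ (Q : Matrix n n 𝕜) :
      RCLike.re (Q * (N * ρ * N)).trace = (1 - ε) * RCLike.re (Q * ρ₀).trace := by
    rw [hNρN, mul_smul_comm, trace_smul, smul_eq_mul, RCLike.re_ofReal_mul]
  have hlow : 1 - ε ≤ RCLike.re (N * ρ).trace := by
    have h := RCLike.nonneg_iff.mp <| PosSemidef.trace_mul_nonneg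
      (CFC.le_sqrt_of_le_one (sub_nonneg.mpr hΛ1) (sub_le_self 1 hΛ)) hρ
    rw [sub_mul, trace_sub, sub_mul, one_mul, trace_sub, hρtr, hε, map_sub, map_sub,
      RCLike.one_re, RCLike.ofReal_re] at h
    linarith [h.1]
  have hsplit : RCLike.re (N * ρ).trace =
      RCLike.re (P * N * ρ).trace + RCLike.re ((1 - P) * N * ρ).trace := by
    rw [← map_add, ← trace_add, ← add_mul, ← add_mul, add_sub_cancel, one_mul]
  have hcs := add_le_add (hP.re_trace_mul_mul_le hNH hρ) (hP.one_sub.re_trace_mul_mul_le hNH hρ)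
  rw [hσ, hσ, re_trace_one_sub_mul P hρtr,
    re_trace_one_sub_mul P (trace_postMeasurement_eq_one hρtr hΛ1 hε hεlt hρ₀),
    Real.sqrt_mul h1ε.le, Real.sqrt_mul h1ε.le, ← hsplit] at hcs
  refine le_of_mul_le_mul_left ?_ (Real.sqrt_pos.mpr h1ε)
  rw [Real.mul_self_sqrt h1ε.le]
  linarith

lemma re_trace_mul_sub_le_sqrt (hρ : ρ.PosSemidef) (hρtr : ρ.trace = 1) (hΛ : 0 ≤ Λ)
    (hΛ1 : Λ ≤ 1) (hε : (Λ * ρ).trace = ε) (hεlt : ε < 1)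
    (hρ₀ : ρ₀ = ((1 - ε : ℝ) : 𝕜)⁻¹ • (CFC.sqrt (1 - Λ) * ρ * CFC.sqrt (1 - Λ)))
    {P : Matrix n n 𝕜} (hP : IsStarProjection P) :
    RCLike.re (P * ρ).trace - RCLike.re (P * ρ₀).trace ≤ √ε := by
  have hfid := sqrt_one_sub_le_sqrt_mul_sqrt_add hρ hρtr hΛ hΛ1 hε hεlt hρ₀ hP
  have hbound := sq_sub_add_sq_sqrt_mul_add_sqrt_mul_le_one (hP.re_trace_mul_mem_Icc hρ hρtr)
    (hP.re_trace_mul_mem_Icc (posSemidef_postMeasurement hρ hεlt hρ₀)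
      (trace_postMeasurement_eq_one hρtr hΛ1 hε hεlt hρ₀))
  have hfid_sq := pow_le_pow_left₀ (Real.sqrt_nonneg _) hfid 2
  rw [Real.sq_sqrt (sub_pos.mpr hεlt).le] at hfid_sq
  exact (le_abs_self _).trans (Real.abs_le_sqrt (by linarith))

end GentleMeasurement

end Matrix

/-- **Almost As Good As New Lemma** (gentle measurement).
If a POVM element `Λ` accepts the density matrix `ρ` with probability `ε < 1`,
then the normalized post-measurement state `ρ₀ = √(1-Λ) ρ √(1-Λ) / (1-ε)`
conditioned on outcome 0 satisfies `‖ρ - ρ₀‖_tr ≤ √ε`, where the trace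
distance is half the sum of the absolute values of the eigenvalues of `ρ - ρ₀`. -/
theorem almost_as_good_as_new {d : ℕ}
    (ρ Λ : Matrix (Fin d) (Fin d) ℂ)
    (hρ : ρ.PosSemidef) (hρtr : ρ.trace = 1)
    (hΛ : Λ.PosSemidef) (hΛ1 : (1 - Λ).PosSemidef)
    (ε : ℝ) (hε : (Λ * ρ).trace = (ε : ℂ)) (hεlt : ε < 1)
    (ρ₀ : Matrix (Fin d) (Fin d) ℂ)
    (hρ₀ : ρ₀ = ((1 - ε : ℝ) : ℂ)⁻¹ • (hΛ1.sqrt * ρ * hΛ1.sqrt))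
    (hHerm : (ρ - ρ₀).IsHermitian) :
    (1 / 2) * ∑ i, |hHerm.eigenvalues i| ≤ Real.sqrt ε := by
  rw [hΛ1.sqrt_eq_cfcSqrt] at hρ₀
  have hρ₀tr := trace_postMeasurement_eq_one hρtr hΛ1 hε hεlt hρ₀
  obtain ⟨P, hP, hdist⟩ := hHerm.exists_isStarProjection_half_sum_abs_eigenvalues_eq
    (by rw [trace_sub, hρtr, hρ₀tr, sub_self])
  rw [hdist, mul_sub, trace_sub, map_sub]
  exact re_trace_mul_sub_le_sqrt hρ hρtr hΛ.nonneg hΛ1 hε hεlt hρ₀ hP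
end

section
/- Derandomization of randomized advice by a union bound (core of the theorem MA/rpoly = MA/poly): Let X, Z, and R be nonempty finite types (inputs, witnesses, and advice strings), let L : X → Prop be a predicate, let A : X → R → Z → Prop be a (decidable) acceptance predicate, and let D : R → ℝ be a probability distribution on R (D r ≥ 0 for all r, and Σ_r D r = 1). Let δ ≥ 0 satisfy δ·(|X| + |X|·|Z|) < 1. Suppose that: (i) for every x with L x there exists a witness z ∈ Z such that Σ_{r : ¬ A x r z} D r ≤ δ (the chosen witness is rejected with probability at most δ), and (ii) for every x with ¬ L x and every z ∈ Z, Σ_{r : A x r z} D r ≤ δ (every witness is accepted with probability at most δ). Then there exists a single fixed advice string r ∈ R such that: for every x with L x there exists z with A x r z, and for every x with ¬ L x and every z, ¬ A x r z. -/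
open BigOperators Finset

lemma union_bound_aux {ι α : Type} [DecidableEq ι] [DecidableEq α] (s : Finset ι) (E : ι → Finset α)
    (f : α → ℝ) (hf : ∀ a, 0 ≤ f a) :
    ∑ a ∈ s.biUnion E, f a ≤ ∑ i ∈ s, ∑ a ∈ E i, f a := by
  induction s using Finset.induction with
  | empty => simp
  | @insert a s h ih =>
    rw [biUnion_insert, sum_insert h]
    have h1 : ∑ x ∈ E a ∪ s.biUnion E, f x + ∑ x ∈ E a ∩ s.biUnion E, f x
        = ∑ x ∈ E a, f x + ∑ x ∈ s.biUnion E, f x := Finset.sum_union_inter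
    have h2 : 0 ≤ ∑ x ∈ E a ∩ s.biUnion E, f x := Finset.sum_nonneg fun x _ => hf x
    linarith

/-- Derandomization of randomized advice by a union bound (core of
`MA/rpoly = MA/poly`).  If a randomized advice distribution `D` makes an
`MA`-type verifier `A` err with probability at most `δ` on each of the
(at most `|X| + |X|·|Z|`) relevant events, and `δ·(|X| + |X|·|Z|) < 1`, then
some fixed advice string `r` works simultaneously for all inputs and witnesses. -/
theorem derandomize_ma_advice
    {X Z R : Type} [Fintype X] [Fintype Z] [Fintype R]
    [Nonempty X] [Nonempty Z] [Nonempty R]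
    (L : X → Prop) (A : X → R → Z → Prop)
    [∀ x r z, Decidable (A x r z)]
    (D : R → ℝ) (hD0 : ∀ r, 0 ≤ D r) (hD1 : ∑ r, D r = 1)
    (δ : ℝ) (hδ0 : 0 ≤ δ)
    (hδ : δ * ((Fintype.card X : ℝ) + (Fintype.card X : ℝ) * (Fintype.card Z : ℝ)) < 1)
    (hyes : ∀ x, L x → ∃ z : Z, ∑ r ∈ univ.filter (fun r => ¬ A x r z), D r ≤ δ)
    (hno : ∀ x, ¬ L x → ∀ z : Z, ∑ r ∈ univ.filter (fun r => A x r z), D r ≤ δ) :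
    ∃ r : R, (∀ x, L x → ∃ z : Z, A x r z) ∧ (∀ x, ¬ L x → ∀ z : Z, ¬ A x r z) := by
  classical
  by_contra hcon
  push_neg at hcon
  -- every r is "bad"
  have hbad : ∀ r : R, (∃ x, L x ∧ ∀ z, ¬ A x r z) ∨ (∃ x z, ¬ L x ∧ A x r z) := by
    intro r
    by_cases hP : ∀ x, L x → ∃ z, A x r z
    · obtain ⟨x, hx, z, hz⟩ := hcon r hP
      exact Or.inr ⟨x, z, hx, hz⟩
    · push_neg at hP
      obtain ⟨x, hx, hall⟩ := hP
      exact Or.inl ⟨x, hx, hall⟩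
  set E : X ⊕ X × Z → Finset R := fun i =>
    match i with
    | Sum.inl x => if h : L x then univ.filter (fun r => ¬ A x r (hyes x h).choose) else ∅
    | Sum.inr (x, z) => if L x then ∅ else univ.filter (fun r => A x r z) with hE
  have hcov : (univ : Finset R) ⊆ univ.biUnion E := by
    intro r _
    rw [mem_biUnion]
    rcases hbad r with ⟨x, hx, hall⟩ | ⟨x, z, hx, hz⟩
    · exact ⟨Sum.inl x, mem_univ _, by
        simp only [hE, dif_pos hx, mem_filter, mem_univ, true_and]
        exact hall _⟩
    · exact ⟨Sum.inr (x, z), mem_univ _, by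
        simp only [hE, if_neg hx, mem_filter, mem_univ, true_and]
        exact hz⟩
  have hEbound : ∀ i, ∑ r ∈ E i, D r ≤ δ := by
    rintro (x | ⟨x, z⟩)
    · by_cases h : L x
      · simpa [hE, dif_pos h] using (hyes x h).choose_spec
      · simp [hE, dif_neg h, hδ0]
    · by_cases h : L x
      · simp [hE, if_pos h, hδ0]
      · simpa [hE, if_neg h] using hno x h z
  have h1 : (1 : ℝ) ≤ ∑ i : X ⊕ X × Z, ∑ r ∈ E i, D r := by
    calc (1 : ℝ) = ∑ r, D r := hD1.symm
    _ ≤ ∑ r ∈ univ.biUnion E, D r :=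
        Finset.sum_le_sum_of_subset_of_nonneg hcov (fun r _ _ => hD0 r)
    _ ≤ ∑ i : X ⊕ X × Z, ∑ r ∈ E i, D r := union_bound_aux _ _ _ hD0
  have h2 : ∑ i : X ⊕ X × Z, ∑ r ∈ E i, D r ≤
      δ * ((Fintype.card X : ℝ) + (Fintype.card X : ℝ) * (Fintype.card Z : ℝ)) := by
    calc ∑ i : X ⊕ X × Z, ∑ r ∈ E i, D r ≤ ∑ _i : X ⊕ X × Z, δ :=
          Finset.sum_le_sum fun i _ => hEbound i
    _ = (Fintype.card (X ⊕ X × Z) : ℝ) * δ := by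
          rw [Finset.sum_const, Finset.card_univ, nsmul_eq_mul]
    _ = δ * ((Fintype.card X : ℝ) + (Fintype.card X : ℝ) * (Fintype.card Z : ℝ)) := by
          rw [Fintype.card_sum, Fintype.card_prod]; push_cast; ring
  linarith
end
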